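/- arXiv:1704.05486 — 3 statements merged into one kernel-verified Lean document; each statement's English description precedes it below -/
import Mathlib

section
/- Let B_1, …, B_k be nonempty compact convex subsets of ℝⁿ, and for each subset s ⊆ [k] define v(s) = Vol_n(∑_{i ∈ s} B_i) (with v(∅) = 0). Then v is a supermodular set function: for all subsets s, t of [k], v(s ∪ t) + v(s ∩ t) ≥ v(s) + v(t). -/
/-!
Write `A = ∑_{s ∩ t} B i`, `B' = ∑_{s \ t} B i`, `C = ∑_{t \ s} B i`; the claim becomes
`μ (A + B') + μ (A + C) ≤ μ (A + B' + C) + μ A`. A translate `K` of `A` lies in `K' = A + B'`, so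
it suffices that `μ (K' \ K) ≤ μ ((K' + C) \ (K + C))` for compact convex `K ⊆ K'`.

For `C` the convex hull of finitely many points `w j` this is an injection argument. Let `p` be
the nearest-point map onto `K` and `n x = x - p x`; cut `K' \ K` into pieces according to the
first `j` maximising `⟪n x, w j⟫`, and translate the piece of `j` by `w j`. Since `C` lies in the
half-space `{c | ⟪n x, c⟫ ≤ ⟪n x, w j⟫}`, the translates miss `K + C`, and they are disjoint
because `‖n x - n y‖² ≤ ⟪n x - n y, x - y⟫`. A general `C` is replaced by the convex hull of an
`ε`-net at the cost of `ε`-thickening `K`, `K'` and `K' + C`, whose measures converge as `ε → 0`.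
-/

open MeasureTheory Metric Set
open scoped Pointwise RealInnerProductSpace

variable {E : Type*} [NormedAddCommGroup E] [InnerProductSpace ℝ E]

/-- The variational form of "`p x` is the point of `K` nearest to `x`"
(cf. `norm_eq_iInf_iff_real_inner_le_zero`). -/
def IsMetricProjection (K : Set E) (p : E → E) : Prop :=
  ∀ x, p x ∈ K ∧ ∀ y ∈ K, ⟪x - p x, y - p x⟫ ≤ 0

theorem Convex.exists_isMetricProjection {K : Set E} (hconv : Convex ℝ K) (hK : IsComplete K)
    (hne : K.Nonempty) : ∃ p, IsMetricProjection K p := by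
  choose p hpK hp using fun x ↦ exists_norm_eq_iInf_of_complete_convex hne hK hconv x
  exact ⟨p, fun x ↦ ⟨hpK x, (norm_eq_iInf_iff_real_inner_le_zero hconv (hpK x)).mp (hp x)⟩⟩

theorem lipschitzWith_one_of_sq_norm_sub_le_inner {f : E → E}
    (hf : ∀ x y, ‖f x - f y‖ ^ 2 ≤ ⟪f x - f y, x - y⟫) : LipschitzWith 1 f := by
  refine LipschitzWith.of_dist_le_mul fun x y ↦ ?_
  rw [dist_eq_norm, dist_eq_norm, NNReal.coe_one, one_mul]
  have := (hf x y).trans (real_inner_le_norm _ _)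
  nlinarith [norm_nonneg (f x - f y), norm_nonneg (x - y)]

namespace IsMetricProjection

variable {K : Set E} {p : E → E}

theorem sq_norm_sub_le_inner (hp : IsMetricProjection K p) (x y : E) :
    ‖(x - p x) - (y - p y)‖ ^ 2 ≤ ⟪(x - p x) - (y - p y), x - y⟫ := by
  have hx := (hp x).2 (p y) (hp y).1
  have hy := (hp y).2 (p x) (hp x).1
  rw [← neg_sub (p x) (p y), inner_neg_right, neg_nonpos] at hx
  have hxy : x - y = ((x - p x) - (y - p y)) + (p x - p y) := by abel
  rw [hxy, inner_add_right, real_inner_self_eq_norm_sq, inner_sub_left]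
  linarith

theorem continuous_sub (hp : IsMetricProjection K p) : Continuous fun x ↦ x - p x :=
  (lipschitzWith_one_of_sq_norm_sub_le_inner hp.sq_norm_sub_le_inner).continuous

theorem add_notMem_add (hp : IsMetricProjection K p) {C : Set E} {x c₀ : E} (hx : x ∉ K)
    (hc₀ : ∀ c ∈ C, ⟪x - p x, c⟫ ≤ ⟪x - p x, c₀⟫) : x + c₀ ∉ K + C := by
  rintro ⟨k, hk, c, hc, hkc⟩
  have hpos : 0 < ‖x - p x‖ := norm_pos_iff.mpr fun h ↦ hx (sub_eq_zero.mp h ▸ (hp x).1)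
  have hck : c - c₀ = (x - p x) - (k - p x) := by
    rw [eq_sub_of_add_eq' hkc]; abel
  have h : ⟪x - p x, c⟫ - ⟪x - p x, c₀⟫ = ‖x - p x‖ ^ 2 - ⟪x - p x, k - p x⟫ := by
    rw [← inner_sub_right, hck, inner_sub_right, real_inner_self_eq_norm_sq]
  nlinarith [(hp x).2 k hk, hc₀ c hc]

theorem sub_eq_of_add_eq_add (hp : IsMetricProjection K p) {x y c₁ c₂ : E}
    (hx : ⟪x - p x, c₂⟫ ≤ ⟪x - p x, c₁⟫) (hy : ⟪y - p y, c₁⟫ ≤ ⟪y - p y, c₂⟫)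
    (h : c₁ + x = c₂ + y) : x - p x = y - p y := by
  have hxy : x - y = c₂ - c₁ := by rw [sub_eq_sub_iff_add_eq_add, add_comm, h, add_comm]
  have := hp.sq_norm_sub_le_inner x y
  rw [hxy, inner_sub_left, inner_sub_right, inner_sub_right] at this
  rw [← sub_eq_zero, ← norm_eq_zero]
  nlinarith [norm_nonneg ((x - p x) - (y - p y))]

end IsMetricProjection

theorem inner_le_of_mem_convexHull {s : Set E} {u c : E} {a : ℝ} (hs : ∀ y ∈ s, ⟪u, y⟫ ≤ a)
    (hc : c ∈ convexHull ℝ s) : ⟪u, c⟫ ≤ a :=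
  convexHull_min hs (convex_halfSpace_le (innerₛₗ ℝ u).isLinear a) hc

variable [MeasurableSpace E] [BorelSpace E] (μ : Measure E) [μ.IsAddLeftInvariant]

theorem measure_diff_le_measure_add_convexHull_diff {K K' F : Set E} (hK : IsComplete K)
    (hKc : Convex ℝ K) (hKne : K.Nonempty) (hK' : MeasurableSet K') (hF : F.Finite)
    (hFne : F.Nonempty) :
    μ (K' \ K) ≤ μ ((K' + convexHull ℝ F) \ (K + convexHull ℝ F)) := by
  obtain ⟨p, hp⟩ := hKc.exists_isMetricProjection hK hKne
  obtain ⟨m, w, -, rfl⟩ := hF.fin_param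
  have : Nonempty (Fin m) := range_nonempty_iff_nonempty.mp hFne
  let A : Fin m → Set E := fun j ↦ {u | ∀ i, ⟪u, w i⟫ ≤ ⟪u, w j⟫}
  have hA : ∀ j, MeasurableSet (A j) := fun j ↦ by
    simp only [A, ofPred_forall]
    exact (isClosed_iInter fun i ↦ isClosed_le (by fun_prop) (by fun_prop)).measurableSet
  let R : Fin m → Set E := fun j ↦ (K' \ K) ∩ (fun x ↦ x - p x) ⁻¹' disjointed A j
  have hR : ∀ j, MeasurableSet (R j) := fun j ↦
    (hK'.diff hK.isClosed.measurableSet).inter <| hp.continuous_sub.measurable <|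
      disjointedRec (fun _ i ht ↦ ht.diff (hA i)) (hA j)
  have hcover : K' \ K ⊆ ⋃ j, R j := fun x hx ↦ by
    have hmax : x - p x ∈ ⋃ j, A j :=
      mem_iUnion.mpr (Finite.exists_max fun i ↦ ⟪x - p x, w i⟫)
    rw [← iUnion_disjointed] at hmax
    obtain ⟨j, hj⟩ := mem_iUnion.mp hmax
    exact mem_iUnion.mpr ⟨j, hx, hj⟩
  have hdisj : Pairwise (Function.onFun Disjoint fun j ↦ w j +ᵥ R j) := fun i j hij ↦ by
    refine Set.disjoint_left.mpr ?_
    rintro _ ⟨x, hx, rfl⟩ ⟨y, hy, hxy⟩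
    have hxi := disjointed_subset A i hx.2
    have hyj := disjointed_subset A j hy.2
    have hnxy := hp.sub_eq_of_add_eq_add (hxi j) (hyj i) hxy.symm
    have hy' : x - p x ∈ disjointed A j := hnxy ▸ hy.2
    exact (disjoint_disjointed A hij).ne_of_mem hx.2 hy' rfl
  have hsub : ∀ j, w j +ᵥ R j ⊆ (K' + convexHull ℝ (range w)) \ (K + convexHull ℝ (range w)) := by
    rintro j _ ⟨x, ⟨⟨hxK', hxK⟩, hxA⟩, rfl⟩
    have hwj : w j ∈ convexHull ℝ (range w) := subset_convexHull ℝ _ (mem_range_self j)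
    rw [mem_preimage] at hxA
    simp only [vadd_eq_add, add_comm (w j)]
    refine ⟨add_mem_add hxK' hwj, hp.add_notMem_add hxK fun c hc ↦ ?_⟩
    exact inner_le_of_mem_convexHull (forall_mem_range.mpr (disjointed_subset A j hxA)) hc
  calc μ (K' \ K) ≤ μ (⋃ j, R j) := measure_mono hcover
    _ ≤ ∑' j, μ (R j) := measure_iUnion_le R
    _ = ∑' j, μ (w j +ᵥ R j) := by simp only [measure_vadd]
    _ = μ (⋃ j, w j +ᵥ R j) := (measure_iUnion hdisj fun j ↦ (hR j).const_vadd _).symm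
    _ ≤ _ := measure_mono (iUnion_subset hsub)

theorem measure_add_measure_add_convexHull_le_of_subset {K K' F : Set E} (hK : IsCompact K)
    (hKc : Convex ℝ K) (hKne : K.Nonempty) (hK' : MeasurableSet K') (hKK' : K ⊆ K')
    (hF : F.Finite) (hFne : F.Nonempty) :
    μ K' + μ (K + convexHull ℝ F) ≤ μ (K' + convexHull ℝ F) + μ K := by
  have hKH : MeasurableSet (K + convexHull ℝ F) :=
    (hK.add (hF.isCompact_convexHull ℝ)).isClosed.measurableSet
  have hK'_eq := measure_sdiff_add_inter (μ := μ) K' hK.isClosed.measurableSet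
  have hK'H_eq := measure_sdiff_add_inter (μ := μ) (K' + convexHull ℝ F) hKH
  rw [inter_eq_right.mpr hKK'] at hK'_eq
  rw [inter_eq_right.mpr (add_subset_add_right hKK')] at hK'H_eq
  calc μ K' + μ (K + convexHull ℝ F) = μ (K' \ K) + μ (K + convexHull ℝ F) + μ K := by
        rw [← hK'_eq, add_right_comm]
    _ ≤ μ ((K' + convexHull ℝ F) \ (K + convexHull ℝ F)) + μ (K + convexHull ℝ F) + μ K := by
        gcongr ?_ + _ + _
        exact measure_diff_le_measure_add_convexHull_diff μ hK.isComplete hKc hKne hK' hF hFne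
    _ = μ (K' + convexHull ℝ F) + μ K := by rw [hK'H_eq]

variable [ProperSpace E] [IsFiniteMeasureOnCompacts μ]

theorem measure_add_measure_add_le_of_subset {K K' C : Set E} (hK : IsCompact K)
    (hKc : Convex ℝ K) (hKne : K.Nonempty) (hK' : IsCompact K') (hKK' : K ⊆ K')
    (hC : IsCompact C) (hCc : Convex ℝ C) (hCne : C.Nonempty) :
    μ K' + μ (K + C) ≤ μ (K' + C) + μ K := by
  have hthick : ∀ ε > 0,
      μ K' + μ (K + C) ≤ μ (cthickening ε (K' + C)) + μ (cthickening ε K) := by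
    intro ε hε
    obtain ⟨F, hFC, hF, hCF⟩ := finite_cover_balls_of_compact hC hε
    have hFne : F.Nonempty := by
      obtain ⟨c, hc⟩ := hCne
      obtain ⟨y, hy, -⟩ := mem_iUnion₂.mp (hCF hc)
      exact ⟨y, hy⟩
    have hCH : C ⊆ convexHull ℝ F + closedBall 0 ε := by
      rw [← thickening_eq_biUnion_ball] at hCF
      calc C ⊆ cthickening ε F := hCF.trans (thickening_subset_cthickening ε F)
        _ = F + closedBall 0 ε := (hF.isCompact.add_closedBall_zero hε.le).symm
        _ ⊆ convexHull ℝ F + closedBall 0 ε := add_subset_add_right (subset_convexHull ℝ F)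
    have h1 : K + C ⊆ cthickening ε K + convexHull ℝ F := by
      rw [← hK.add_closedBall_zero hε.le, add_right_comm, add_assoc]
      exact add_subset_add_left hCH
    have h2 : cthickening ε K' + convexHull ℝ F ⊆ cthickening ε (K' + C) := by
      rw [← hK'.add_closedBall_zero hε.le, ← (hK'.add hC).add_closedBall_zero hε.le, add_right_comm]
      exact add_subset_add_right (add_subset_add_left (convexHull_min hFC hCc))
    calc μ K' + μ (K + C)
        ≤ μ (cthickening ε K') + μ (cthickening ε K + convexHull ℝ F) := by
          gcongr
          exact self_subset_cthickening K'
      _ ≤ μ (cthickening ε K' + convexHull ℝ F) + μ (cthickening ε K) :=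
          measure_add_measure_add_convexHull_le_of_subset μ hK.cthickening (hKc.cthickening ε)
            (hKne.mono (self_subset_cthickening K)) isClosed_cthickening.measurableSet
            (cthickening_subset_of_subset ε hKK') hF hFne
      _ ≤ μ (cthickening ε (K' + C)) + μ (cthickening ε K) := by gcongr
  have hlim := (tendsto_measure_cthickening_of_isCompact (μ := μ) (hK'.add hC)).add
    (tendsto_measure_cthickening_of_isCompact (μ := μ) hK)
  exact ge_of_tendsto (hlim.mono_left nhdsWithin_le_nhds)
    (eventually_nhdsWithin_of_forall (s := Ioi 0) hthick)

theorem measure_add_add_measure_add_le {A B C : Set E} (hA : IsCompact A) (hAc : Convex ℝ A)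
    (hAne : A.Nonempty) (hB : IsCompact B) (hBne : B.Nonempty) (hC : IsCompact C)
    (hCc : Convex ℝ C) (hCne : C.Nonempty) :
    μ (A + B) + μ (A + C) ≤ μ (A + B + C) + μ A := by
  obtain ⟨b, hb⟩ := hBne
  have hbA : b +ᵥ A ⊆ A + B := by
    rintro _ ⟨a, ha, rfl⟩
    show b + a ∈ A + B
    rw [add_comm b a]
    exact add_mem_add ha hb
  have := measure_add_measure_add_le_of_subset μ (hA.vadd b) (hAc.vadd b)
    (vadd_set_nonempty.mpr hAne) (hA.add hB) hbA hC hCc hCne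
  rwa [vadd_add_assoc, measure_vadd, measure_vadd] at this

/-- **Supermodularity of the volume of Minkowski sums of convex bodies** (Theorem 4.6
of Fradelizi–Madiman–Marsiglietti–Zvavitch): for nonempty compact convex sets
`B 1, …, B k ⊆ ℝⁿ`, the set function `v(s) = Vol_n(∑_{i ∈ s} B i)` (with the empty
Minkowski sum equal to `{0}`, so `v(∅) = 0`) is supermodular:
`v(s ∪ t) + v(s ∩ t) ≥ v(s) + v(t)` for all `s, t ⊆ [k]`. -/
theorem volume_minkowski_sum_supermodular {n k : ℕ}
    (B : Fin k → Set (EuclideanSpace ℝ (Fin n)))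
    (hne : ∀ i, (B i).Nonempty) (hcpt : ∀ i, IsCompact (B i))
    (hconv : ∀ i, Convex ℝ (B i)) (s t : Finset (Fin k)) :
    volume (∑ i ∈ s, B i) + volume (∑ i ∈ t, B i) ≤
      volume (∑ i ∈ s ∪ t, B i) + volume (∑ i ∈ s ∩ t, B i) := by
  have hcpt' (u : Finset (Fin k)) : IsCompact (∑ i ∈ u, B i) :=
    Finset.sum_induction B IsCompact (fun _ _ ↦ IsCompact.add)
      (by rw [← singleton_zero]; exact isCompact_singleton) fun i _ ↦ hcpt i
  have hconv' (u : Finset (Fin k)) : Convex ℝ (∑ i ∈ u, B i) := convex_sum B fun i _ ↦ hconv i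
  have hne' (u : Finset (Fin k)) : (∑ i ∈ u, B i).Nonempty :=
    Finset.sum_induction B Set.Nonempty (fun _ _ ↦ Nonempty.add) zero_nonempty fun i _ ↦ hne i
  have hs : ∑ i ∈ s, B i = ∑ i ∈ s ∩ t, B i + ∑ i ∈ s \ t, B i :=
    (Finset.sum_inter_add_sum_sdiff s t B).symm
  have ht : ∑ i ∈ t, B i = ∑ i ∈ s ∩ t, B i + ∑ i ∈ t \ s, B i := by
    rw [Finset.inter_comm]
    exact (Finset.sum_inter_add_sum_sdiff t s B).symm
  have hst : ∑ i ∈ s ∪ t, B i = ∑ i ∈ s, B i + ∑ i ∈ t \ s, B i := by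
    rw [← Finset.union_sdiff_self_eq_union, Finset.sum_union Finset.disjoint_sdiff]
  rw [hst, ht, hs]
  exact measure_add_add_measure_add_le volume (hcpt' _) (hconv' _) (hne' _) (hcpt' _) (hne' _)
    (hcpt' _) (hconv' _) (hne' _)
end

section
/- Let A be a nonempty compact subset of ℝⁿ and let k ≥ 1 be an integer. Then c(A(k)) ≤ c(A)/k. -/
open MeasureTheory Finset
open scoped Pointwise

/-- The Minkowski average `A(k) = (A + ⋯ + A)/k` (`k` Minkowski summands) of a set
`A ⊆ ℝⁿ`: the set of all averages `(a 1 + ⋯ + a k)/k` with each `a i ∈ A`. -/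
def minkAvg {n : ℕ} (A : Set (EuclideanSpace ℝ (Fin n))) (k : ℕ) :
    Set (EuclideanSpace ℝ (Fin n)) :=
  {x | ∃ a : Fin k → EuclideanSpace ℝ (Fin n), (∀ i, a i ∈ A) ∧ x = (k : ℝ)⁻¹ • ∑ i, a i}

/-- **Schneider's non-convexity index**: `c(A) = inf {λ ≥ 0 : A + λ·conv(A) is convex}`,
where the sum is a Minkowski sum. -/
noncomputable def schneiderIndex {n : ℕ} (A : Set (EuclideanSpace ℝ (Fin n))) : ℝ :=
  sInf {l : ℝ | 0 ≤ l ∧ Convex ℝ (A + l • convexHull ℝ A)}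

/-! If `A + λ • conv A` is convex, it equals `(1 + λ) • conv A`. Adding `k - 1` more copies of `A`
then gives `A + ⋯ + A + λ • conv A = (k + λ) • conv A`, and since `conv A(k) = conv A`, dividing
by `k` shows that `A(k) + (λ / k) • conv A(k)` is convex. The infimum survives this rescaling
because the admissible `λ` form a nonempty set, by Schneider's bound `c(A) ≤ n`: Carathéodory
writes `x ∈ conv A` as a convex combination of at most `n + 1` points of `A`, one of which, `a`,
has weight at least `1 / (n + 1)`, so `(n + 1) • x = a + n • c` with `c ∈ conv A`. -/

open Module (finrank)

section Convex

variable {E : Type*} [AddCommGroup E] [Module ℝ E]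

lemma add_smul_convexHull_eq_of_convex {A : Set E} {l : ℝ} (hl : 0 ≤ l)
    (h : Convex ℝ (A + l • convexHull ℝ A)) :
    A + l • convexHull ℝ A = (1 + l) • convexHull ℝ A := by
  rw [← h.convexHull_eq, convexHull_add, convexHull_smul, (convex_convexHull ℝ A).convexHull_eq,
    (convex_convexHull ℝ A).add_smul zero_le_one hl, one_smul]

lemma sum_add_smul_eq_of_add_smul_eq {A K : Set E} (hK : Convex ℝ K) {l : ℝ} (hl : 0 ≤ l)
    (h : A + l • K = (1 + l) • K) : ∀ m : ℕ, (∑ _i : Fin m, A) + l • K = (m + l) • K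
  | 0 => by simp
  | m + 1 => by
    rw [Fin.sum_univ_succ, add_assoc, sum_add_smul_eq_of_add_smul_eq hK hl h m,
      hK.add_smul (Nat.cast_nonneg m) hl, ← add_assoc, add_comm (A : Set E), add_assoc, h,
      ← hK.add_smul (Nat.cast_nonneg m) (by positivity)]
    congr 1
    push_cast
    ring

lemma Convex.sum_fin_const_eq_smul {C : Set E} (hC : Convex ℝ C) {m : ℕ} (hm : m ≠ 0) :
    ∑ _i : Fin m, C = (m : ℝ) • C := by
  obtain ⟨m, rfl⟩ := Nat.exists_eq_add_one_of_ne_zero hm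
  have h := sum_add_smul_eq_of_add_smul_eq (A := C) hC zero_le_one
    (by rw [hC.add_smul zero_le_one zero_le_one, one_smul]) m
  rw [Fin.sum_univ_castSucc, Nat.cast_succ, ← h, one_smul]

lemma exists_mem_convexHull_sum_smul_eq_smul_add {ι : Type*} {t : Finset ι} {z : ι → E}
    {w : ι → ℝ} {A : Set E} (hz : ∀ i ∈ t, z i ∈ A) (hw : ∀ i ∈ t, 0 ≤ w i)
    (hw₁ : ∑ i ∈ t, w i = 1) {j : ι} (hj : j ∈ t) {s : ℝ} (hs : s ≤ w j) (hs₁ : s < 1) :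
    ∃ c ∈ convexHull ℝ A, ∑ i ∈ t, w i • z i = s • z j + (1 - s) • c := by
  classical
  set v : ι → ℝ := fun i ↦ w i - if i = j then s else 0 with hv
  have hv₀ : ∀ i ∈ t, 0 ≤ v i := by
    intro i hi
    by_cases hij : i = j
    · subst hij; simpa [hv] using hs
    · simpa [hv, hij] using hw i hi
  have hv₁ : ∑ i ∈ t, v i = 1 - s := by simp [hv, sum_sub_distrib, hw₁, hj]
  refine ⟨t.centerMass v z, t.centerMass_mem_convexHull hv₀ (by linarith) hz, ?_⟩
  rw [Finset.centerMass, hv₁, smul_inv_smul₀ (by linarith)]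
  simp [hv, sub_smul, sum_sub_distrib, ite_smul, hj]

variable [FiniteDimensional ℝ E]

lemma exists_convex_combination_with_weight_ge_inv_finrank_succ {A : Set E} {x : E} (hx : x ∈ convexHull ℝ A) :
    ∃ t : Finset E, ↑t ⊆ A ∧ ∃ w : E → ℝ, (∀ y ∈ t, 0 ≤ w y) ∧ ∑ y ∈ t, w y = 1 ∧
      ∑ y ∈ t, w y • y = x ∧ ∃ y ∈ t, (finrank ℝ E + 1 : ℝ)⁻¹ ≤ w y := by
  rw [convexHull_eq_union] at hx
  simp only [Set.mem_iUnion] at hx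
  obtain ⟨t, htA, hind, hxt⟩ := hx
  obtain ⟨w, hw₀, hw₁, rfl⟩ := Finset.mem_convexHull'.mp hxt
  have hcard : #t ≤ finrank ℝ E + 1 := by
    have := hind.card_le_finrank_succ
    have := Submodule.finrank_le (vectorSpan ℝ (Set.range ((↑) : t → E)))
    simp only [Fintype.card_coe] at *
    omega
  have hne : t.Nonempty := by
    by_contra h
    simp [Finset.not_nonempty_iff_eq_empty.mp h] at hw₁
  refine ⟨t, htA, w, hw₀, hw₁, rfl, exists_le_of_sum_le hne ?_⟩
  rw [hw₁, sum_const, nsmul_eq_mul, ← div_eq_mul_inv, div_le_one (by positivity)]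
  exact_mod_cast hcard

lemma finrank_add_one_smul_mem_add_finrank_smul_convexHull (hd : finrank ℝ E ≠ 0) {A : Set E}
    {x : E} (hx : x ∈ convexHull ℝ A) :
    (finrank ℝ E + 1 : ℝ) • x ∈ A + (finrank ℝ E : ℝ) • convexHull ℝ A := by
  obtain ⟨t, htA, w, hw₀, hw₁, rfl, j, hj, hwj⟩ :=
    exists_convex_combination_with_weight_ge_inv_finrank_succ hx
  have hd' : (0 : ℝ) < finrank ℝ E := by positivity
  obtain ⟨c, hc, hx⟩ := exists_mem_convexHull_sum_smul_eq_smul_add (fun y hy ↦ htA hy) hw₀ hw₁ hj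
    hwj (inv_lt_one_of_one_lt₀ (by linarith))
  have h : (finrank ℝ E + 1 : ℝ) • ∑ y ∈ t, w y • y = j + (finrank ℝ E : ℝ) • c := by
    rw [hx, smul_add, smul_smul, smul_smul, mul_inv_cancel₀ (by positivity), one_smul]
    congr 2
    field_simp
    ring
  exact h ▸ Set.add_mem_add (htA hj) (Set.smul_mem_smul_set hc)

theorem convex_add_finrank_smul_convexHull (A : Set E) :
    Convex ℝ (A + (finrank ℝ E : ℝ) • convexHull ℝ A) := by
  rcases eq_or_ne (finrank ℝ E) 0 with hd | hd
  · have : Subsingleton E := Module.finrank_zero_iff.mp hd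
    exact Set.subsingleton_of_subsingleton.convex
  have hK := convex_convexHull ℝ A
  suffices h : A + (finrank ℝ E : ℝ) • convexHull ℝ A = (finrank ℝ E + 1 : ℝ) • convexHull ℝ A by
    rw [h]
    exact hK.smul _
  apply Set.Subset.antisymm
  · rw [add_comm (finrank ℝ E : ℝ), hK.add_smul zero_le_one (Nat.cast_nonneg _), one_smul]
    exact Set.add_subset_add_right (subset_convexHull ℝ A)
  · exact Set.smul_set_subset_iff.mpr fun x hx ↦
      finrank_add_one_smul_mem_add_finrank_smul_convexHull hd hx

end Convex

section MinkAvg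

variable {n : ℕ} {A : Set (EuclideanSpace ℝ (Fin n))} {k : ℕ}

lemma minkAvg_eq_smul_sum (A : Set (EuclideanSpace ℝ (Fin n))) (k : ℕ) :
    minkAvg A k = (k : ℝ)⁻¹ • ∑ _i : Fin k, A := by
  ext x
  simp only [minkAvg, Set.mem_ofPred_eq, Set.mem_smul_set, Set.mem_fintype_sum]
  constructor
  · rintro ⟨a, ha, rfl⟩
    exact ⟨_, ⟨a, ha, rfl⟩, rfl⟩
  · rintro ⟨_, ⟨a, ha, rfl⟩, rfl⟩
    exact ⟨a, ha, rfl⟩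

lemma convexHull_minkAvg (hk : k ≠ 0) : convexHull ℝ (minkAvg A k) = convexHull ℝ A := by
  rw [minkAvg_eq_smul_sum, convexHull_smul, convexHull_sum,
    (convex_convexHull ℝ A).sum_fin_const_eq_smul hk, smul_smul,
    inv_mul_cancel₀ (Nat.cast_ne_zero.mpr hk), one_smul]

lemma convex_minkAvg_add_smul_convexHull (hk : k ≠ 0) {l : ℝ} (hl : 0 ≤ l)
    (h : Convex ℝ (A + l • convexHull ℝ A)) :
    Convex ℝ (minkAvg A k + (l / k) • convexHull ℝ (minkAvg A k)) := by
  have hK := convex_convexHull ℝ A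
  rw [convexHull_minkAvg hk, minkAvg_eq_smul_sum, div_eq_inv_mul, mul_smul, ← smul_add,
    sum_add_smul_eq_of_add_smul_eq hK hl (add_smul_convexHull_eq_of_convex hl h)]
  exact (hK.smul _).smul _

end MinkAvg

theorem schneiderIndex_minkAvg_le_div_general {n : ℕ} (A : Set (EuclideanSpace ℝ (Fin n)))
    (k : ℕ) (hk : 1 ≤ k) :
    schneiderIndex (minkAvg A k) ≤ schneiderIndex A / k := by
  have hk₀ : k ≠ 0 := Nat.one_le_iff_ne_zero.mp hk
  set S := {l : ℝ | 0 ≤ l ∧ Convex ℝ (A + l • convexHull ℝ A)}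
  have hS : (finrank ℝ (EuclideanSpace ℝ (Fin n)) : ℝ) ∈ S :=
    ⟨Nat.cast_nonneg _, convex_add_finrank_smul_convexHull A⟩
  have hsub : (k : ℝ)⁻¹ • S ⊆
      {l : ℝ | 0 ≤ l ∧ Convex ℝ (minkAvg A k + l • convexHull ℝ (minkAvg A k))} := by
    refine Set.smul_set_subset_iff.mpr fun l ⟨hl, hconv⟩ ↦ ?_
    rw [smul_eq_mul, ← div_eq_inv_mul]
    exact ⟨by positivity, convex_minkAvg_add_smul_convexHull hk₀ hl hconv⟩
  calc schneiderIndex (minkAvg A k)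
      ≤ sInf ((k : ℝ)⁻¹ • S) :=
        csInf_le_csInf ⟨0, fun _ hl ↦ hl.1⟩ ⟨_, Set.smul_mem_smul_set hS⟩ hsub
    _ = schneiderIndex A / k := by
      rw [Real.sInf_smul_of_nonneg (by positivity), smul_eq_mul, ← div_eq_inv_mul]
      rfl

/-- **Convergence rate for Schneider's non-convexity index** (Theorem 5.5 of
Fradelizi–Madiman–Marsiglietti–Zvavitch): for a nonempty compact `A ⊆ ℝⁿ` and `k ≥ 1`,
`c(A(k)) ≤ c(A)/k`. -/
theorem schneiderIndex_minkAvg_le_div {n : ℕ} (A : Set (EuclideanSpace ℝ (Fin n)))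
    (hne : A.Nonempty) (hcpt : IsCompact A) (k : ℕ) (hk : 1 ≤ k) :
    schneiderIndex (minkAvg A k) ≤ schneiderIndex A / k :=
  schneiderIndex_minkAvg_le_div_general A k hk
end

section
/- Let K be a compact convex body in ℝⁿ containing 0 in its interior, and let A_1, …, A_k be nonempty compact sets in ℝⁿ with k ≥ n + 1. Then d^{(K)}(∑_{i ∈ [k]} A_i) ≤ max over subsets I ⊆ [k] with |I| = n of d^{(K)}(∑_{i ∈ I} A_i), and consequently d^{(K)}(∑_{i ∈ [k]} A_i) ≤ n · max_{i ∈ [k]} d^{(K)}(A_i). -/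
open MeasureTheory Finset
open scoped Pointwise

/-- The Hausdorff distance from a set `A ⊆ ℝⁿ` to its convex hull, measured with
respect to the (possibly nonsymmetric) norm with unit ball `K`:
`d^{(K)}(A) = inf {r > 0 : conv(A) ⊆ A + r·K}` (Minkowski sum). -/
noncomputable def distToConv {n : ℕ} (K A : Set (EuclideanSpace ℝ (Fin n))) : ℝ :=
  sInf {r : ℝ | 0 < r ∧ convexHull ℝ A ⊆ A + r • K}

/-!
By the Shapley–Folkman lemma, every point of `conv (∑ i, A i) = ∑ i, conv (A i)` is a sum
`∑ i, z i` with `z i ∈ conv (A i)` and `z i ∈ A i` for all but at most `n` indices. Enlarging the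
exceptional indices to a set `I` of exactly `n` indices, `∑ i ∈ I, z i` lies in
`∑ i ∈ I, A i + r • K` for every `r > d^{(K)}(∑ i ∈ I, A i)`, while the other summands already lie
in their `A i`; this is the first bound. The second follows from the subadditivity
`d^{(K)}(A + B) ≤ d^{(K)}(A) + d^{(K)}(B)`.

The Shapley–Folkman lemma is Carathéodory's theorem for the lifted sets `A i × {e i}` in
`ℝⁿ × ℝᵏ`. They lie in the hyperplane where the last `k` coordinates sum to `1`, so a point of
their convex hull is a convex combination of at most `n + k` lifted points. Each index `i` is used
by at least one of them, hence at most `n` indices are used twice or more, and every other `z i`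
is a single point of `A i`.
-/

open Module Bornology

theorem Finset.card_filter_one_lt_card_add_card_le {α ι : Type*} [Fintype ι] [DecidableEq ι]
    (s : Finset α) (f : α → ι) (hf : ∀ i, ∃ a ∈ s, f a = i) :
    #{i | 1 < #{a ∈ s | f a = i}} + Fintype.card ι ≤ #s := by
  rw [card_eq_sum_card_fiberwise (f := f) (t := univ) fun a _ => mem_coe.2 (mem_univ _),
    card_filter, ← card_univ, card_eq_sum_ones, ← sum_add_distrib]
  refine sum_le_sum fun i _ => ?_
  obtain ⟨a, ha, rfl⟩ := hf i
  have : 0 < #{b ∈ s | f b = f a} := card_pos.2 ⟨a, mem_filter.2 ⟨ha, rfl⟩⟩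
  split_ifs <;> omega

section Caratheodory

variable {𝕜 F : Type*} [Field 𝕜] [AddCommGroup F] [Module 𝕜 F] [FiniteDimensional 𝕜 F]

theorem finrank_vectorSpan_lt_of_forall_eq (L : F →ₗ[𝕜] 𝕜) (hL : L ≠ 0) {s : Set F} {c : 𝕜}
    (hs : ∀ q ∈ s, L q = c) : finrank 𝕜 (vectorSpan 𝕜 s) < finrank 𝕜 F := by
  refine (Submodule.finrank_mono ?_).trans_lt (Submodule.finrank_lt (mt LinearMap.ker_eq_top.1 hL))
  rw [vectorSpan_def, Submodule.span_le]
  rintro _ ⟨q₁, hq₁, q₂, hq₂, rfl⟩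
  simp [hs q₁ hq₁, hs q₂ hq₂]

theorem exists_finset_card_le_finrank_vectorSpan_of_mem_convexHull [LinearOrder 𝕜]
    [IsStrictOrderedRing 𝕜] {s : Set F} {p : F} (hp : p ∈ convexHull 𝕜 s) :
    ∃ t : Finset F, ↑t ⊆ s ∧ #t ≤ finrank 𝕜 (vectorSpan 𝕜 s) + 1 ∧
      p ∈ convexHull 𝕜 (t : Set F) := by
  rw [convexHull_eq_union] at hp
  simp only [Set.mem_iUnion] at hp
  obtain ⟨t, hts, hind, hpt⟩ := hp
  refine ⟨t, hts, ?_, hpt⟩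
  have hspan : vectorSpan 𝕜 (Set.range ((↑) : t → F)) ≤ vectorSpan 𝕜 s :=
    vectorSpan_mono 𝕜 (by simpa using hts)
  simpa using hind.card_le_finrank_succ.trans (Nat.succ_le_succ (Submodule.finrank_mono hspan))

end Caratheodory

section ShapleyFolkman

variable {E ι : Type*} [AddCommGroup E] [Module ℝ E] [FiniteDimensional ℝ E] [Fintype ι]

theorem exists_fiberwise_convex_combination [DecidableEq ι] [Nonempty ι] {A : ι → Set E} {x : E}
    (hx : x ∈ ∑ i, convexHull ℝ (A i)) :
    ∃ (t : Finset (ι × E)) (w : ι × E → ℝ), #t ≤ finrank ℝ E + Fintype.card ι ∧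
      (∀ q ∈ t, 0 ≤ w q ∧ q.2 ∈ A q.1) ∧ (∀ i, ∑ q ∈ t with q.1 = i, w q = 1) ∧
      ∑ q ∈ t, w q • q.2 = x := by
  classical
  obtain ⟨y, hy, rfl⟩ := (Set.mem_fintype_sum _ _).1 hx
  set k : ℝ := (Fintype.card ι : ℝ)
  have hk : k ≠ 0 := by positivity
  let lift : ι × E → E × (ι → ℝ) := fun q => (q.2, Pi.single q.1 1)
  have hlift : lift.Injective := fun q q' h => by
    have h₁ : q.1 = q'.1 := by
      simpa [lift, Pi.single_apply] using congrFun (congrArg Prod.snd h) q.1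
    exact Prod.ext h₁ (congrArg Prod.fst h)
  let S : Set (ι × E) := {q | q.2 ∈ A q.1}
  have hspan : finrank ℝ (vectorSpan ℝ (lift '' S)) + 1 ≤ finrank ℝ E + Fintype.card ι := by
    let L : E × (ι → ℝ) →ₗ[ℝ] ℝ := ∑ j, (LinearMap.proj j).comp (LinearMap.snd ℝ E (ι → ℝ))
    have hL : ∀ i a, L (lift (i, a)) = 1 := fun i a => by simp [L, lift]
    obtain ⟨i⟩ := ‹Nonempty ι›
    have hlt := finrank_vectorSpan_lt_of_forall_eq L (fun h => by simpa [h] using hL i 0)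
      (s := lift '' S) (c := 1) (by rintro _ ⟨q, -, rfl⟩; exact hL q.1 q.2)
    rwa [Module.finrank_prod, Module.finrank_fintype_fun_eq_card] at hlt
  have hp : ∑ i, k⁻¹ • (y i, Pi.single i 1) ∈ convexHull ℝ (lift '' S) := by
    refine (convex_convexHull ℝ _).sum_mem (fun _ _ => by positivity) (by simp [k, hk])
      fun i _ => convexHull_mono ?_ (mk_mem_convexHull_prod (hy i) (subset_convexHull ℝ _ rfl))
    rintro ⟨a, _⟩ ⟨ha, rfl⟩
    exact ⟨(i, a), ha, rfl⟩
  obtain ⟨t, ht, htcard, hpt⟩ := exists_finset_card_le_finrank_vectorSpan_of_mem_convexHull hp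
  obtain ⟨s, hsS, rfl⟩ := Finset.subset_set_image_iff.1 ht
  obtain ⟨w, hw0, -, hwp⟩ := Finset.mem_convexHull'.1 hpt
  rw [Finset.sum_image hlift.injOn] at hwp
  refine ⟨s, fun q => k * w (lift q), ?_, fun q hq => ⟨?_, hsS hq⟩, fun i => ?_, ?_⟩
  · rw [card_image_of_injective _ hlift] at htcard
    omega
  · exact mul_nonneg (by positivity) (hw0 _ (mem_image_of_mem _ hq))
  · have h : ∑ q ∈ s with q.1 = i, w (lift q) = k⁻¹ := by
      simpa [lift, Prod.snd_sum, Finset.sum_apply, Pi.single_apply, sum_filter, eq_comm]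
        using congrFun (congrArg Prod.snd hwp) i
    rw [← mul_sum, h, mul_inv_cancel₀ hk]
  · have h : ∑ q ∈ s, w (lift q) • q.2 = k⁻¹ • ∑ i, y i := by
      simpa [lift, Prod.fst_sum, smul_sum] using congrArg Prod.fst hwp
    calc ∑ q ∈ s, (k * w (lift q)) • q.2 = k • ∑ q ∈ s, w (lift q) • q.2 := by
          simp_rw [mul_smul, smul_sum]
      _ = ∑ i, y i := by rw [h, smul_inv_smul₀ hk]

theorem shapley_folkman [Nonempty ι] {A : ι → Set E} {x : E}
    (hx : x ∈ ∑ i, convexHull ℝ (A i)) :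
    ∃ z : ι → E, (∀ i, z i ∈ convexHull ℝ (A i)) ∧ ∑ i, z i = x ∧
      ∃ J : Finset ι, #J ≤ finrank ℝ E ∧ ∀ i ∉ J, z i ∈ A i := by
  classical
  obtain ⟨t, w, hcard, htA, hw1, hwx⟩ := exists_fiberwise_convex_combination hx
  have hfiber : ∀ i, ∃ q ∈ t, q.1 = i := fun i => by
    obtain ⟨q, hq, -⟩ := exists_ne_zero_of_sum_ne_zero ((hw1 i).symm ▸ one_ne_zero)
    exact ⟨q, (mem_filter.1 hq).1, (mem_filter.1 hq).2⟩
  refine ⟨fun i => ∑ q ∈ t with q.1 = i, w q • q.2, fun i => ?_, ?_,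
    ({i | 1 < #{q ∈ t | q.1 = i}} : Finset ι), ?_, fun i hi => ?_⟩
  · refine (convex_convexHull ℝ _).sum_mem (fun q hq => (htA q (mem_filter.1 hq).1).1) (hw1 i)
      fun q hq => subset_convexHull ℝ _ ?_
    obtain ⟨hqt, rfl⟩ := mem_filter.1 hq
    exact (htA q hqt).2
  · rw [sum_fiberwise t Prod.fst (fun q => w q • q.2), hwx]
  · have := card_filter_one_lt_card_add_card_le t Prod.fst hfiber
    omega
  · obtain ⟨q, hqt, rfl⟩ := hfiber i
    have hsingle : {p ∈ t | p.1 = q.1} = {q} :=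
      eq_singleton_iff_unique_mem.2 ⟨mem_filter.2 ⟨hqt, rfl⟩,
        fun p hp => card_le_one.1 (by simpa using hi) p hp q (mem_filter.2 ⟨hqt, rfl⟩)⟩
    have hwq : w q = 1 := by simpa [hsingle] using hw1 q.1
    simpa [hsingle, hwq] using (htA q hqt).2

end ShapleyFolkman

theorem Bornology.IsBounded.finsetSum {E ι : Type*} [SeminormedAddCommGroup E] (s : Finset ι)
    {A : ι → Set E} (hA : ∀ i ∈ s, IsBounded (A i)) : IsBounded (∑ i ∈ s, A i) :=
  sum_induction _ IsBounded (fun _ _ => .add) isBounded_singleton hA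

section DistToConv

variable {n : ℕ} {K : Set (EuclideanSpace ℝ (Fin n))}

theorem distToConv_nonneg (K A : Set (EuclideanSpace ℝ (Fin n))) : 0 ≤ distToConv K A :=
  Real.sInf_nonneg fun _ hr => hr.1.le

theorem distToConv_le_of_forall_lt {C : Set (EuclideanSpace ℝ (Fin n))} {M : ℝ} (hM : 0 ≤ M)
    (h : ∀ r, M < r → convexHull ℝ C ⊆ C + r • K) : distToConv K C ≤ M :=
  le_of_forall_gt_imp_ge_of_dense fun r hr =>
    csInf_le ⟨0, fun _ hs => hs.1.le⟩ ⟨hM.trans_lt hr, h r hr⟩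

theorem distToConv_eq_zero_of_convex (hK : (0 : EuclideanSpace ℝ (Fin n)) ∈ K)
    {C : Set (EuclideanSpace ℝ (Fin n))} (hC : Convex ℝ C) : distToConv K C = 0 := by
  refine (distToConv_le_of_forall_lt le_rfl fun r _ => ?_).antisymm (distToConv_nonneg K C)
  rw [hC.convexHull_eq]
  exact Set.subset_add_left C (Set.zero_mem_smul_set hK)

theorem exists_convexHull_subset_add_smul (hK0 : (0 : EuclideanSpace ℝ (Fin n)) ∈ interior K)
    {C : Set (EuclideanSpace ℝ (Fin n))} (hC : IsBounded C) :
    ∃ r : ℝ, 0 < r ∧ convexHull ℝ C ⊆ C + r • K := by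
  have hbdd : IsBounded (convexHull ℝ C - convexHull ℝ C) :=
    (isBounded_convexHull.2 hC).sub (isBounded_convexHull.2 hC)
  obtain ⟨r, hr, hsub⟩ := ((NormedSpace.isVonNBounded_iff ℝ).2 hbdd
    (mem_interior_iff_mem_nhds.1 hK0)).exists_pos
  refine ⟨r, hr, fun x hx => ?_⟩
  obtain ⟨c, hc⟩ := convexHull_nonempty_iff.1 ⟨x, hx⟩
  have hxc := hsub r (by simp [abs_of_pos hr]) (Set.sub_mem_sub hx (subset_convexHull ℝ C hc))
  exact ⟨c, hc, x - c, hxc, add_sub_cancel c x⟩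

theorem convexHull_subset_add_smul_of_distToConv_lt (hKconv : Convex ℝ K)
    (hK0 : (0 : EuclideanSpace ℝ (Fin n)) ∈ interior K) {C : Set (EuclideanSpace ℝ (Fin n))}
    (hC : IsBounded C) {r : ℝ} (h : distToConv K C < r) : convexHull ℝ C ⊆ C + r • K := by
  obtain ⟨r₀, hr₀, hcover⟩ := exists_convexHull_subset_add_smul hK0 hC
  obtain ⟨s, ⟨hs, hsub⟩, hsr⟩ := exists_lt_of_csInf_lt
    (s := {r : ℝ | 0 < r ∧ convexHull ℝ C ⊆ C + r • K}) ⟨r₀, hr₀, hcover⟩ h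
  refine hsub.trans (Set.add_subset_add_left ?_)
  calc s • K ⊆ s • ((r / s) • K) := Set.smul_set_mono fun v hv =>
        hKconv.mem_smul_of_zero_mem (interior_subset hK0) hv ((one_le_div hs).2 hsr.le)
    _ = r • K := by rw [smul_smul, mul_div_cancel₀ _ hs.ne']

theorem distToConv_add_le (hKconv : Convex ℝ K)
    (hK0 : (0 : EuclideanSpace ℝ (Fin n)) ∈ interior K) {A B : Set (EuclideanSpace ℝ (Fin n))}
    (hA : IsBounded A) (hB : IsBounded B) :
    distToConv K (A + B) ≤ distToConv K A + distToConv K B := by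
  refine distToConv_le_of_forall_lt (add_nonneg (distToConv_nonneg K A) (distToConv_nonneg K B))
    fun r hr => ?_
  set ε := (r - (distToConv K A + distToConv K B)) / 2
  have hε : 0 < ε := by simp only [ε]; linarith
  have hεA := convexHull_subset_add_smul_of_distToConv_lt hKconv hK0 hA
    (lt_add_of_pos_right (distToConv K A) hε)
  have hεB := convexHull_subset_add_smul_of_distToConv_lt hKconv hK0 hB
    (lt_add_of_pos_right (distToConv K B) hε)
  calc convexHull ℝ (A + B) = convexHull ℝ A + convexHull ℝ B := convexHull_add A B
    _ ⊆ (A + (distToConv K A + ε) • K) + (B + (distToConv K B + ε) • K) :=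
        Set.add_subset_add hεA hεB
    _ = (A + B) + ((distToConv K A + ε) + (distToConv K B + ε)) • K := by
        rw [add_add_add_comm, hKconv.add_smul (p := distToConv K A + ε) (q := distToConv K B + ε)
          (by linarith [distToConv_nonneg K A]) (by linarith [distToConv_nonneg K B])]
    _ = (A + B) + r • K := by congr 3; simp only [ε]; ring

theorem distToConv_finset_sum_le {ι : Type*} (hKconv : Convex ℝ K)
    (hK0 : (0 : EuclideanSpace ℝ (Fin n)) ∈ interior K) (s : Finset ι)
    {A : ι → Set (EuclideanSpace ℝ (Fin n))} (hA : ∀ i ∈ s, IsBounded (A i)) :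
    distToConv K (∑ i ∈ s, A i) ≤ ∑ i ∈ s, distToConv K (A i) :=
  le_sum_of_subadditive_on_pred (distToConv K) IsBounded
    (distToConv_eq_zero_of_convex (interior_subset hK0) (convex_singleton 0)).le
    (fun _ _ => distToConv_add_le hKconv hK0) (fun _ _ => .add) A hA

theorem distToConv_sum_le_of_forall_card_eq {ι : Type*} [Fintype ι] (hKconv : Convex ℝ K)
    (hK0 : (0 : EuclideanSpace ℝ (Fin n)) ∈ interior K) {A : ι → Set (EuclideanSpace ℝ (Fin n))}
    (hA : ∀ i, IsBounded (A i)) (hn : n < Fintype.card ι) {M : ℝ}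
    (hM : ∀ J : Finset ι, #J = n → distToConv K (∑ i ∈ J, A i) ≤ M) :
    distToConv K (∑ i, A i) ≤ M := by
  classical
  have : Nonempty ι := Fintype.card_pos_iff.1 (by omega)
  obtain ⟨J₀, -, hJ₀⟩ := exists_superset_card_eq (s := (∅ : Finset ι)) (by simp) hn.le
  refine distToConv_le_of_forall_lt ((distToConv_nonneg _ _).trans (hM J₀ hJ₀)) fun r hr => ?_
  rw [convexHull_sum]
  intro x hx
  obtain ⟨z, hz, rfl, J', hJ'card, hzA⟩ := shapley_folkman hx
  rw [finrank_euclideanSpace_fin] at hJ'card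
  obtain ⟨J, hJ'J, hJ⟩ := exists_superset_card_eq hJ'card hn.le
  have hzJ : ∑ i ∈ J, z i ∈ convexHull ℝ (∑ i ∈ J, A i) := by
    rw [convexHull_sum]
    exact Set.finsetSum_mem_finsetSum J _ z fun i _ => hz i
  obtain ⟨u, hu, v, hv, huv⟩ := convexHull_subset_add_smul_of_distToConv_lt hKconv hK0
    (IsBounded.finsetSum J fun i _ => hA i) ((hM J hJ).trans_lt hr) hzJ
  have hzA' : ∑ i ∈ Jᶜ, z i ∈ ∑ i ∈ Jᶜ, A i :=
    Set.finsetSum_mem_finsetSum _ _ _ fun i hi => hzA i fun h => mem_compl.1 hi (hJ'J h)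
  rw [← sum_compl_add_sum J z, ← sum_compl_add_sum J A, ← huv, ← add_assoc]
  exact Set.add_mem_add (Set.add_mem_add hzA' hu) hv

end DistToConv

theorem distToConv_sum_le_max_general {n k : ℕ} (hk : n + 1 ≤ k)
    (K : Set (EuclideanSpace ℝ (Fin n)))
    (hKconv : Convex ℝ K)
    (hK0 : (0 : EuclideanSpace ℝ (Fin n)) ∈ interior K)
    (A : Fin k → Set (EuclideanSpace ℝ (Fin n)))
    (hcpt : ∀ i, IsCompact (A i)) :
    (distToConv K (∑ i, A i) ≤
        ⨆ I : {I : Finset (Fin k) // I.card = n},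
          distToConv K (∑ i ∈ (I : Finset (Fin k)), A i)) ∧
      distToConv K (∑ i, A i) ≤ n * ⨆ i : Fin k, distToConv K (A i) := by
  have hA : ∀ i, IsBounded (A i) := fun i => (hcpt i).isBounded
  have hfirst : distToConv K (∑ i, A i) ≤
      ⨆ I : {I : Finset (Fin k) // #I = n}, distToConv K (∑ i ∈ I.1, A i) :=
    distToConv_sum_le_of_forall_card_eq hKconv hK0 hA (by simpa using hk)
      fun J hJ => le_ciSup (Set.finite_range fun I : {I : Finset (Fin k) // #I = n} =>
        distToConv K (∑ i ∈ I.1, A i)).bddAbove ⟨J, hJ⟩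
  have : Nonempty {I : Finset (Fin k) // #I = n} := by
    obtain ⟨I, -, hI⟩ :=
      exists_subset_card_eq (s := (univ : Finset (Fin k))) (n := n) (by simp; omega)
    exact ⟨⟨I, hI⟩⟩
  refine ⟨hfirst, hfirst.trans (ciSup_le fun I => ?_)⟩
  calc distToConv K (∑ i ∈ I.1, A i) ≤ ∑ i ∈ I.1, distToConv K (A i) :=
        distToConv_finset_sum_le hKconv hK0 _ fun i _ => hA i
    _ ≤ ∑ _i ∈ I.1, ⨆ j, distToConv K (A j) :=
        sum_le_sum fun i _ => le_ciSup (Set.finite_range fun j => distToConv K (A j)).bddAbove i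
    _ = n * ⨆ j, distToConv K (A j) := by rw [sum_const, I.2, nsmul_eq_mul]

/-- **Corollary 7.5 of Fradelizi–Madiman–Marsiglietti–Zvavitch**: for a compact convex
body `K ⊆ ℝⁿ` with `0` in its interior and nonempty compact sets `A 1, …, A k ⊆ ℝⁿ`
with `k ≥ n + 1`, one has
`d^{(K)}(∑_{i ∈ [k]} A i) ≤ max_{I ⊆ [k], |I| = n} d^{(K)}(∑_{i ∈ I} A i)` and
consequently `d^{(K)}(∑_{i ∈ [k]} A i) ≤ n · max_{i ∈ [k]} d^{(K)}(A i)`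
(maxima written as suprema over the corresponding finite nonempty index families). -/
theorem distToConv_sum_le_max {n k : ℕ} (hk : n + 1 ≤ k)
    (K : Set (EuclideanSpace ℝ (Fin n)))
    (hKcpt : IsCompact K) (hKconv : Convex ℝ K)
    (hK0 : (0 : EuclideanSpace ℝ (Fin n)) ∈ interior K)
    (A : Fin k → Set (EuclideanSpace ℝ (Fin n)))
    (hne : ∀ i, (A i).Nonempty) (hcpt : ∀ i, IsCompact (A i)) :
    (distToConv K (∑ i, A i) ≤
        ⨆ I : {I : Finset (Fin k) // I.card = n},
          distToConv K (∑ i ∈ (I : Finset (Fin k)), A i)) ∧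
      distToConv K (∑ i, A i) ≤ n * ⨆ i : Fin k, distToConv K (A i) :=
  distToConv_sum_le_max_general hk K hKconv hK0 A hcpt
end
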